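/- Let d be a positive squarefree integer with d ≡ 3 (mod 4), let a be a positive integer, and let ψ be a Dirichlet character modulo a. Then for every complex s with Re(s) > 0, the family over primes p ↦ (1 − ψ(p)·p^{−s} + (1 + χ(p)/p)^{−s}·ψ(p)·p^{−s}) is multipliable (the infinite product over all primes converges). -/

import Mathlib

/-!
The factor at `p` is `1 + ((1 + χ(p)/p)^{-s} - 1) ψ(p) p^{-s}`. Since `z ↦ (1 + z)^{-s}` is
differentiable at `0`, the bracket is `O(1/p)`, so the correction term is `O(p^{-1-Re s})`,
which is summable over the primes when `Re s > 0`; an absolutely summable perturbation of `1`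
is multipliable.
-/

/-- The quadratic character attached to `ℚ(√-d)`, defined on primes:
`χ(2) = (-1)^((d²-1)/8)` and `χ(p) = (-d/p)` (Legendre symbol) for odd primes `p`;
`0` off the primes. -/
noncomputable def chi (d : ℕ) (p : ℕ) : ℤ :=
  if hp : p.Prime then
    if p = 2 then (-1) ^ ((d ^ 2 - 1) / 8)
    else @legendreSym p ⟨hp⟩ (-(d : ℤ))
  else 0

open Asymptotics Filter Topology

lemma abs_legendreSym_le_one (p : ℕ) [Fact p.Prime] (a : ℤ) : |legendreSym p a| ≤ 1 := by
  rcases eq_or_ne (a : ZMod p) 0 with h | h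
  · simp [(legendreSym.eq_zero_iff p a).mpr h]
  · rcases legendreSym.eq_one_or_neg_one p h with h | h <;> simp [h]

lemma abs_chi_le_one (d p : ℕ) : |chi d p| ≤ 1 := by
  unfold chi
  split_ifs with hp
  · simp
  · exact @abs_legendreSym_le_one p ⟨hp⟩ _
  · simp

lemma one_add_cpow_sub_one_isBigO (s : ℂ) : (fun z : ℂ => (1 + z) ^ s - 1) =O[𝓝 0] id := by
  have hdiff : DifferentiableAt ℂ (fun z : ℂ => (1 + z) ^ s) 0 :=
    (differentiableAt_id.const_add 1).cpow_const (by simp)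
  simpa [Function.id_def] using hdiff.isBigO_sub

lemma Nat.Primes.tendsto_coe_cofinite_atTop :
    Tendsto (fun p : Nat.Primes => (p : ℝ)) cofinite atTop :=
  tendsto_natCast_atTop_atTop.comp <|
    Nat.cofinite_eq_atTop ▸ Nat.Primes.coe_nat_injective.tendsto_cofinite

lemma Nat.Primes.multipliable_one_add_cpow_sub_one_mul {c b : Nat.Primes → ℂ} {C : ℝ}
    (hc : ∀ p, ‖c p‖ ≤ C) (hb : ∀ p, ‖b p‖ ≤ 1) {s : ℂ} (hs : 0 < s.re) :
    Multipliable fun p : Nat.Primes =>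
      1 + ((1 + c p / p) ^ (-s) - 1) * b p * (p : ℂ) ^ (-s) := by
  have hp : ∀ p : Nat.Primes, (0 : ℝ) < p := fun p => mod_cast p.2.pos
  have hx : (fun p : Nat.Primes => c p / p) =O[cofinite] fun p => (p : ℝ) ^ (-1 : ℝ) :=
    IsBigO.of_bound C <| Eventually.of_forall fun p => by
      rw [norm_div, Complex.norm_natCast, Real.rpow_neg_one, norm_inv, Real.norm_natCast,
        div_eq_mul_inv]
      exact mul_le_mul_of_nonneg_right (hc p) (by positivity)
  have hx0 : Tendsto (fun p : Nat.Primes => c p / p) cofinite (𝓝 0) :=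
    hx.trans_tendsto <| by
      simp_rw [Real.rpow_neg_one]
      exact tendsto_inv_atTop_zero.comp Nat.Primes.tendsto_coe_cofinite_atTop
  have hbracket : (fun p : Nat.Primes => (1 + c p / p) ^ (-s) - 1) =O[cofinite]
      fun p => (p : ℝ) ^ (-1 : ℝ) :=
    ((one_add_cpow_sub_one_isBigO (-s)).comp_tendsto hx0).trans hx
  have hrest : (fun p : Nat.Primes => b p * (p : ℂ) ^ (-s)) =O[cofinite]
      fun p => (p : ℝ) ^ (-s.re) :=
    IsBigO.of_bound 1 <| Eventually.of_forall fun p => by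
      rw [norm_mul, Complex.norm_natCast_cpow_of_pos p.2.pos, Complex.neg_re,
        Real.norm_of_nonneg (Real.rpow_nonneg (hp p).le _), one_mul]
      exact mul_le_of_le_one_left (by positivity) (hb p)
  have hterm : (fun p : Nat.Primes => ((1 + c p / p) ^ (-s) - 1) * b p * (p : ℂ) ^ (-s))
      =O[cofinite] fun p => (p : ℝ) ^ (-1 - s.re) := by
    refine (hbracket.mul hrest).congr (fun p => (mul_assoc _ _ _).symm) fun p => ?_
    rw [← Real.rpow_add (hp p), sub_eq_add_neg]
  exact Complex.multipliable_one_add_of_summable <|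
    summable_of_isBigO (Nat.Primes.summable_rpow.mpr (by linarith)) hterm

theorem euler_factor_multipliable_general (d : ℕ)
    (a : ℕ) (ψ : DirichletCharacter ℂ a) (s : ℂ) (hs : 0 < s.re) :
    Multipliable (fun p : Nat.Primes =>
      1 - ψ ((p.1 : ℕ) : ZMod a) * (p.1 : ℂ) ^ (-s) +
        ((1 + (chi d p.1 : ℚ) / (p.1 : ℚ) : ℚ) : ℂ) ^ (-s) * ψ ((p.1 : ℕ) : ZMod a) *
          (p.1 : ℂ) ^ (-s)) := by
  have hchi (p : Nat.Primes) : ‖((chi d p : ℤ) : ℂ)‖ ≤ 1 := by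
    rw [Complex.norm_intCast]; exact_mod_cast abs_chi_le_one d p
  convert Nat.Primes.multipliable_one_add_cpow_sub_one_mul hchi
    (fun p => ψ.norm_le_one ((p : ℕ) : ZMod a)) hs using 2 with p
  push_cast
  ring

/-- For `Re(s) > 0`, the family `p ↦ 1 - ψ(p)p^{-s} + (1 + χ(p)/p)^{-s}·ψ(p)·p^{-s}`
over the primes is multipliable. -/
theorem euler_factor_multipliable (d : ℕ) (hd : 0 < d) (hsq : Squarefree d) (hmod : d % 4 = 3)
    (a : ℕ) (ha : 0 < a) (ψ : DirichletCharacter ℂ a) (s : ℂ) (hs : 0 < s.re) :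
    Multipliable (fun p : Nat.Primes =>
      1 - ψ ((p.1 : ℕ) : ZMod a) * (p.1 : ℂ) ^ (-s) +
        ((1 + (chi d p.1 : ℚ) / (p.1 : ℚ) : ℚ) : ℂ) ^ (-s) * ψ ((p.1 : ℕ) : ZMod a) *
          (p.1 : ℂ) ^ (-s)) :=
  euler_factor_multipliable_general d a ψ s hs
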